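/- arXiv:2108.07042 — 3 statements merged into one kernel-verified Lean document; each statement's English description precedes it below -/
import Mathlib

section
/- Let n and p be positive integers and let A be a finite set of integers consisting of exactly n negative integers and exactly p positive integers (and not containing 0). If α is an integer with 0 ≤ α ≤ n + p, α ≤ n, and α > p, then |Σ_α(A)| ≥ n(n+1)/2 + p(p+1)/2 − (α−p)(α−p+1)/2 + 1. -/
/-!
Split `A` into its negative part `N` and its positive part `P`, and let `k = α - |P|`. Two
families of sums use at least `α` elements: `∑ N` plus a subset sum of `P`, and `∑ A` minus a
sum of at most `|N| - k` elements of `N`. The first family lies below `∑ A` and the second above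
it, so they share at most one value. Each family is counted greedily: when all elements of `B`
have the same sign, allowing `r + 1` instead of `r` summands creates at least `|B| - r` new sums,
obtained by adding one more element to an extremal `r`-subset.
-/

/-- `sigmaAtLeast A α` is the set of all subset sums of `A` coming from
subsets of size at least `α`. -/
def sigmaAtLeast (A : Finset ℤ) (α : ℕ) : Finset ℤ :=
  (A.powerset.filter (fun B => α ≤ B.card)).image (fun B => B.sum id)

open Finset

section SubsetSums

variable {G : Type*} [AddCommGroup G] [LinearOrder G] {B : Finset G} {r : ℕ}

def subsetSumsAtMost (B : Finset G) (r : ℕ) : Finset G :=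
  (B.powerset.filter fun C => #C ≤ r).image fun C => C.sum id

theorem mem_subsetSumsAtMost {s : G} :
    s ∈ subsetSumsAtMost B r ↔ ∃ C ⊆ B, #C ≤ r ∧ C.sum id = s := by
  simp only [subsetSumsAtMost, mem_image, mem_filter, mem_powerset, and_assoc]

@[simp]
theorem subsetSumsAtMost_zero (B : Finset G) : subsetSumsAtMost B 0 = {0} := by
  ext s
  simp [mem_subsetSumsAtMost, eq_comm]

theorem subsetSumsAtMost_mono (B : Finset G) : Monotone (subsetSumsAtMost B) := by
  intro r r' hrr' s hs
  obtain ⟨C, hCB, hCr, rfl⟩ := mem_subsetSumsAtMost.1 hs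
  exact mem_subsetSumsAtMost.2 ⟨C, hCB, hCr.trans hrr', rfl⟩

variable [IsOrderedAddMonoid G]

theorem exists_card_eq_forall_mem_subsetSumsAtMost_le (hB : ∀ x ∈ B, 0 ≤ x) (hr : r ≤ #B) :
    ∃ W ⊆ B, #W = r ∧ ∀ s ∈ subsetSumsAtMost B r, s ≤ W.sum id := by
  obtain ⟨W, hW, hWmax⟩ := exists_max_image (B.powersetCard r) (fun C => C.sum id)
    (powersetCard_nonempty.2 hr)
  rw [mem_powersetCard] at hW
  refine ⟨W, hW.1, hW.2, fun s hs => ?_⟩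
  obtain ⟨C, hCB, hCr, rfl⟩ := mem_subsetSumsAtMost.1 hs
  obtain ⟨C', hCC', hC'B, hC'r⟩ := exists_subsuperset_card_eq hCB hCr hr
  calc C.sum id ≤ C'.sum id := sum_le_sum_of_subset_of_nonneg hCC' fun x hx _ => hB x (hC'B hx)
    _ ≤ W.sum id := hWmax C' (mem_powersetCard.2 ⟨hC'B, hC'r⟩)

theorem card_subsetSumsAtMost_add_le_succ (hB : ∀ x ∈ B, 0 < x) (hr : r < #B) :
    #(subsetSumsAtMost B r) + (#B - r) ≤ #(subsetSumsAtMost B (r + 1)) := by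
  obtain ⟨W, hWB, hWr, hWmax⟩ :=
    exists_card_eq_forall_mem_subsetSumsAtMost_le (fun x hx => (hB x hx).le) hr.le
  -- Adding one more element to the heaviest `r`-subset `W` gives `#B - r` new, larger sums.
  set new := (B \ W).image (W.sum id + ·)
  have hnew : new ⊆ subsetSumsAtMost B (r + 1) := by
    simp only [new, image_subset_iff, mem_sdiff, mem_subsetSumsAtMost]
    rintro x ⟨hxB, hxW⟩
    exact ⟨insert x W, insert_subset hxB hWB, by rw [card_insert_of_notMem hxW, hWr],
      by rw [sum_insert hxW, add_comm]; rfl⟩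
  have hdisj : Disjoint (subsetSumsAtMost B r) new := by
    simp only [disjoint_left, new, mem_image, mem_sdiff, not_exists, not_and]
    rintro s hs x ⟨hxB, -⟩ rfl
    exact (lt_add_of_pos_right _ (hB x hxB)).not_ge (hWmax _ hs)
  calc #(subsetSumsAtMost B r) + (#B - r)
      = #(subsetSumsAtMost B r ∪ new) := by
        rw [card_union_of_disjoint hdisj, card_image_of_injective _ (add_right_injective _),
          card_sdiff_of_subset hWB, hWr]
    _ ≤ #(subsetSumsAtMost B (r + 1)) :=
        card_le_card (union_subset (subsetSumsAtMost_mono B r.le_succ) hnew)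

-- `#(subsetSumsAtMost B r) ≥ 1 + ∑ i < r, (#B - i)`, doubled to avoid division.
theorem card_subsetSumsAtMost_lower_bound_of_pos (hB : ∀ x ∈ B, 0 < x) (hr : r ≤ #B) :
    #B * (#B + 1) + 2 ≤ 2 * #(subsetSumsAtMost B r) + (#B - r) * (#B - r + 1) := by
  induction r with
  | zero => simp [add_comm]
  | succ r ih =>
    have hstep := card_subsetSumsAtMost_add_le_succ hB hr
    have hsucc : #B - r = #B - (r + 1) + 1 := by omega
    rw [hsucc] at ih hstep
    nlinarith [ih (by omega)]

theorem card_subsetSumsAtMost_lower_bound_of_neg (hB : ∀ x ∈ B, x < 0) (hr : r ≤ #B) :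
    #B * (#B + 1) + 2 ≤ 2 * #(subsetSumsAtMost B r) + (#B - r) * (#B - r + 1) :=
  card_subsetSumsAtMost_lower_bound_of_pos (G := Gᵒᵈ) hB hr

end SubsetSums

theorem mem_sigmaAtLeast {A : Finset ℤ} {α : ℕ} {s : ℤ} :
    s ∈ sigmaAtLeast A α ↔ ∃ C ⊆ A, α ≤ #C ∧ C.sum id = s := by
  simp only [sigmaAtLeast, mem_image, mem_filter, mem_powerset, and_assoc]

theorem image_add_subsetSumsAtMost_subset_sigmaAtLeast {A N P : Finset ℤ} {α r : ℕ}
    (hNP : Disjoint N P) (hN : N ⊆ A) (hP : P ⊆ A) (hα : α ≤ #N) :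
    (subsetSumsAtMost P r).image (N.sum id + ·) ⊆ sigmaAtLeast A α := by
  simp only [image_subset_iff, mem_subsetSumsAtMost, mem_sigmaAtLeast]
  rintro _ ⟨C, hCP, -, rfl⟩
  exact ⟨N ∪ C, union_subset hN (hCP.trans hP), hα.trans (card_le_card subset_union_left),
    sum_union (hNP.mono_right hCP)⟩

theorem image_sub_subsetSumsAtMost_subset_sigmaAtLeast {A N : Finset ℤ} {α r : ℕ}
    (hN : N ⊆ A) (hα : α + r ≤ #A) :
    (subsetSumsAtMost N r).image (A.sum id - ·) ⊆ sigmaAtLeast A α := by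
  simp only [image_subset_iff, mem_subsetSumsAtMost, mem_sigmaAtLeast]
  rintro _ ⟨U, hUN, hUr, rfl⟩
  refine ⟨A \ U, sdiff_subset, ?_, ?_⟩
  · rw [card_sdiff_of_subset (hUN.trans hN)]
    omega
  · rw [eq_sub_iff_add_eq, sum_sdiff (hUN.trans hN)]

theorem filter_lt_union_filter_gt_of_notMem {α : Type*} [LinearOrder α] {A : Finset α} {a : α}
    (ha : a ∉ A) : A.filter (· < a) ∪ A.filter (a < ·) = A := by
  rw [← filter_or]
  exact filter_true_of_mem fun x hx => lt_or_gt_of_ne (ne_of_mem_of_not_mem hx ha)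

theorem card_sigmaAtLeast_union_lower_bound {N P : Finset ℤ} {α : ℕ}
    (hN : ∀ x ∈ N, x < 0) (hP : ∀ x ∈ P, 0 < x) (hαN : α ≤ #N) (hαP : #P ≤ α) :
    #N * (#N + 1) + #P * (#P + 1) + 2 ≤
      2 * #(sigmaAtLeast (N ∪ P) α) + (α - #P) * (α - #P + 1) := by
  have hNP : Disjoint N P := disjoint_left.2 fun x hxN hxP => (hN x hxN).not_gt (hP x hxP)
  set k := α - #P
  set S₁ := (subsetSumsAtMost P #P).image (N.sum id + ·)
  set S₂ := (subsetSumsAtMost N (#N - k)).image ((N ∪ P).sum id - ·)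
  have hS : S₁ ∪ S₂ ⊆ sigmaAtLeast (N ∪ P) α := union_subset
    (image_add_subsetSumsAtMost_subset_sigmaAtLeast hNP subset_union_left subset_union_right hαN)
    (image_sub_subsetSumsAtMost_subset_sigmaAtLeast subset_union_left <| by
      rw [card_union_of_disjoint hNP]; omega)
  have hS₁S₂ : S₁ ∩ S₂ ⊆ {(N ∪ P).sum id} := by
    simp only [subset_iff, mem_inter, S₁, S₂, mem_image, mem_subsetSumsAtMost, mem_singleton,
      sum_union hNP]
    rintro _ ⟨⟨_, ⟨C, hCP, -, rfl⟩, rfl⟩, ⟨_, ⟨U, hUN, -, rfl⟩, hU⟩⟩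
    have hC : C.sum id ≤ P.sum id :=
      sum_le_sum_of_subset_of_nonneg hCP fun x hx _ => (hP x hx).le
    have hU : U.sum id ≤ 0 := sum_nonpos fun x hx => (hN x (hUN hx)).le
    linarith
  have h₁ := card_subsetSumsAtMost_lower_bound_of_pos hP le_rfl
  have h₂ := card_subsetSumsAtMost_lower_bound_of_neg hN (Nat.sub_le _ k)
  rw [Nat.sub_self] at h₁
  rw [Nat.sub_sub_self (by omega)] at h₂
  have hS₁ : #S₁ = #(subsetSumsAtMost P #P) := card_image_of_injective _ (add_right_injective _)
  have hS₂ : #S₂ = #(subsetSumsAtMost N (#N - k)) := card_image_of_injective _ sub_right_injective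
  have := card_union_add_card_inter S₁ S₂
  have := card_le_card hS
  have := (card_le_card hS₁S₂).trans_eq (card_singleton _)
  omega

theorem stmt_4_general (n p α : ℕ) (A : Finset ℤ)
    (hneg : (A.filter (fun x => x < 0)).card = n)
    (hpos : (A.filter (fun x => 0 < x)).card = p)
    (h0 : (0 : ℤ) ∉ A)
    (hαn : α ≤ n) (hαp : p < α) :
    ((sigmaAtLeast A α).card : ℤ) ≥
      (n : ℤ) * ((n : ℤ) + 1) / 2 + (p : ℤ) * ((p : ℤ) + 1) / 2
        - ((α : ℤ) - (p : ℤ)) * ((α : ℤ) - (p : ℤ) + 1) / 2 + 1 := by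
  have key := card_sigmaAtLeast_union_lower_bound (N := A.filter (· < 0)) (P := A.filter (0 < ·))
    (fun x hx => (mem_filter.1 hx).2) (fun x hx => (mem_filter.1 hx).2)
    (hneg ▸ hαn) (hpos ▸ hαp.le)
  rw [filter_lt_union_filter_gt_of_notMem h0, hneg, hpos] at key
  zify [hαp.le] at key
  have := (Int.even_mul_succ_self (n : ℤ)).two_dvd
  have := (Int.even_mul_succ_self (p : ℤ)).two_dvd
  have := (Int.even_mul_succ_self ((α : ℤ) - p)).two_dvd
  omega

theorem stmt_4 (n p α : ℕ) (hn : 1 ≤ n) (hp : 1 ≤ p) (A : Finset ℤ)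
    (hneg : (A.filter (fun x => x < 0)).card = n)
    (hpos : (A.filter (fun x => 0 < x)).card = p)
    (h0 : (0 : ℤ) ∉ A)
    (hα : α ≤ n + p) (hαn : α ≤ n) (hαp : p < α) :
    ((sigmaAtLeast A α).card : ℤ) ≥
      (n : ℤ) * ((n : ℤ) + 1) / 2 + (p : ℤ) * ((p : ℤ) + 1) / 2
        - ((α : ℤ) - (p : ℤ)) * ((α : ℤ) - (p : ℤ) + 1) / 2 + 1 :=
  stmt_4_general n p α A hneg hpos h0 hαn hαp
end

section
/- Let n and p be positive integers and let A be a finite set of integers consisting of exactly n negative integers, exactly p positive integers, and 0. If α is an integer with 0 ≤ α ≤ n + p + 1, α ≤ n, and α > p, then |Σ_α(A)| ≥ n(n+1)/2 + p(p+1)/2 − (α−p)(α−p−1)/2 + 1. -/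
/-!
Write `A = N ∪ {0} ∪ P` with `N` negative and `P` positive, and `β = α - p`. The sums `∑ N + s`,
`s ∈ Σ₀(P)`, lie in `[∑ N, ∑ N + ∑ P]`, while the sums `∑ P + t`, `t ∈ Σ_{β-1}(N)` with `t ≠ ∑ N`,
lie strictly above `∑ N + ∑ P`; adding `0` to the subsets, all of them belong to `Σ_α(A)`. For a set
of `m` positive integers, `|Σ_k| ≥ m(m+1)/2 - k(k+1)/2 + 1`: adding a new maximum `x` to `s` with
`k ≤ |s|` creates the `|s| + 1` new sums `∑ s + x - y`, `y ∈ s ∪ {0}`, all above `∑ s`. Applying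
this to `P` and to `-N` gives the bound.
-/

open Finset
open scoped Pointwise

section SubsetSums

variable {A M : Finset ℤ} {k : ℕ} {t : ℤ}

theorem mem_sigmaAtLeast_s8 : t ∈ sigmaAtLeast A k ↔ ∃ B ⊆ A, k ≤ #B ∧ ∑ b ∈ B, b = t := by
  simp [sigmaAtLeast, and_assoc]

theorem sum_mem_sigmaAtLeast (hk : k ≤ #A) : ∑ a ∈ A, a ∈ sigmaAtLeast A k :=
  mem_sigmaAtLeast_s8.2 ⟨A, subset_rfl, hk, rfl⟩

theorem sigmaAtLeast_mono (h : A ⊆ M) : sigmaAtLeast A k ⊆ sigmaAtLeast M k := by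
  intro t ht
  obtain ⟨B, hBA, hk, rfl⟩ := mem_sigmaAtLeast_s8.1 ht
  exact mem_sigmaAtLeast_s8.2 ⟨B, hBA.trans h, hk, rfl⟩

theorem sigmaAtLeast_neg : sigmaAtLeast (-A) k = -sigmaAtLeast A k := by
  ext t
  rw [mem_neg', mem_sigmaAtLeast_s8, mem_sigmaAtLeast_s8]
  constructor
  · rintro ⟨B, hBA, hk, rfl⟩
    exact ⟨-B, by simpa using neg_subset_neg hBA, by rwa [card_neg],
      by rw [sum_neg_index]; exact sum_neg_distrib id⟩
  · rintro ⟨B, hBA, hk, hB⟩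
    exact ⟨-B, neg_subset_neg hBA, by rwa [card_neg],
      by rw [sum_neg_index, ← neg_neg t, ← hB]; exact sum_neg_distrib id⟩

theorem le_sum_of_mem_sigmaAtLeast (hA : ∀ a ∈ A, 0 ≤ a) (ht : t ∈ sigmaAtLeast A k) :
    t ≤ ∑ a ∈ A, a := by
  obtain ⟨B, hBA, -, rfl⟩ := mem_sigmaAtLeast_s8.1 ht
  exact sum_le_sum_of_subset_of_nonneg hBA fun a ha _ => hA a ha

theorem sum_le_of_mem_sigmaAtLeast (hA : ∀ a ∈ A, a ≤ 0) (ht : t ∈ sigmaAtLeast A k) :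
    ∑ a ∈ A, a ≤ t := by
  obtain ⟨B, hBA, -, rfl⟩ := mem_sigmaAtLeast_s8.1 ht
  rw [← sum_sdiff hBA]
  linarith [sum_nonpos (s := A \ B) fun a ha => hA a (sdiff_subset ha)]

theorem card_sigmaAtLeast_add_le_card_sigmaAtLeast_insert {x : ℤ} {s : Finset ℤ}
    (hs : ∀ y ∈ s, 0 < y) (hx : 0 < x) (hsx : ∀ y ∈ s, y < x) (hk : k ≤ #s) :
    #(sigmaAtLeast s k) + (#s + 1) ≤ #(sigmaAtLeast (insert x s) k) := by
  set T := ∑ y ∈ s, y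
  have hxs : x ∉ s := fun h => (hsx x h).false
  let new := (insert 0 s).image (fun y => T + x - y)
  have hnew : new ⊆ sigmaAtLeast (insert x s) k := by
    intro t ht
    obtain ⟨y, hy, rfl⟩ := mem_image.1 ht
    rw [mem_sigmaAtLeast_s8]
    rcases mem_insert.1 hy with rfl | hy
    · exact ⟨insert x s, subset_rfl, by rw [card_insert_of_notMem hxs]; omega,
        by rw [sum_insert hxs]; ring⟩
    · have hxs' : x ∉ s.erase y := fun h => hxs (mem_of_mem_erase h)
      refine ⟨insert x (s.erase y), insert_subset_insert _ (erase_subset _ _), ?_, ?_⟩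
      · rw [card_insert_of_notMem hxs', card_erase_of_mem hy]; omega
      · rw [sum_insert hxs', sum_erase_eq_sub hy]; ring
  have hdisj : Disjoint (sigmaAtLeast s k) new := by
    rw [disjoint_left]
    intro t ht ht'
    obtain ⟨y, hy, rfl⟩ := mem_image.1 ht'
    have hyx : y < x := by
      rcases mem_insert.1 hy with rfl | hy
      exacts [hx, hsx y hy]
    linarith [le_sum_of_mem_sigmaAtLeast (fun y hy => (hs y hy).le) ht]
  have hcard : #new = #s + 1 := by
    rw [card_image_of_injective _ (sub_right_injective (b := T + x)),
      card_insert_of_notMem fun h => (hs 0 h).false]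
  rw [← hcard, ← card_union_of_disjoint hdisj]
  exact card_le_card (union_subset (sigmaAtLeast_mono (subset_insert x s)) hnew)

theorem le_card_sigmaAtLeast_of_pos (hA : ∀ a ∈ A, 0 < a) (hk : k ≤ #A) :
    #A * (#A + 1) + 2 ≤ 2 * #(sigmaAtLeast A k) + k * (k + 1) := by
  induction A using Finset.induction_on_max generalizing k with
  | empty =>
    have := card_pos.2 ⟨_, sum_mem_sigmaAtLeast hk⟩
    simp_all
  | insert x s hsx ih =>
    have hxs : x ∉ s := fun h => (hsx x h).false
    have hs : ∀ y ∈ s, 0 < y := fun y hy => hA y (mem_insert_of_mem hy)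
    rw [card_insert_of_notMem hxs] at hk ⊢
    rcases hk.lt_or_eq with hk | rfl
    · have := ih (k := k) hs (by omega)
      have := card_sigmaAtLeast_add_le_card_sigmaAtLeast_insert (k := k) hs
        (hA x (mem_insert_self x s)) hsx (by omega)
      nlinarith
    · have := card_pos.2 ⟨_, sum_mem_sigmaAtLeast (k := #s + 1) (A := insert x s)
        (card_insert_of_notMem hxs).ge⟩
      omega

end SubsetSums

section SignSplit

variable {A : Finset ℤ}

theorem add_mem_sigmaAtLeast (h0 : 0 ∈ A) {B C : Finset ℤ} {α : ℕ}
    (hB : B ⊆ A.filter (fun x => 0 < x)) (hC : C ⊆ A.filter (fun x => x < 0))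
    (hα : α ≤ #B + #C + 1) :
    ∑ b ∈ B, b + ∑ c ∈ C, c ∈ sigmaAtLeast A α := by
  have hBC : Disjoint B C := disjoint_left.2 fun x hxB hxC =>
    ((mem_filter.1 (hB hxB)).2.trans (mem_filter.1 (hC hxC)).2).false
  have h0BC : (0 : ℤ) ∉ B ∪ C := by
    rw [mem_union]
    rintro (h | h)
    exacts [(mem_filter.1 (hB h)).2.false, (mem_filter.1 (hC h)).2.false]
  refine mem_sigmaAtLeast_s8.2 ⟨insert 0 (B ∪ C), ?_, ?_, ?_⟩
  · exact insert_subset h0 (union_subset (hB.trans (filter_subset _ _))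
      (hC.trans (filter_subset _ _)))
  · rwa [card_insert_of_notMem h0BC, card_union_of_disjoint hBC]
  · rw [sum_insert h0BC, sum_union hBC, zero_add]

theorem card_add_card_sigmaAtLeast_le (h0 : 0 ∈ A) {α i j : ℕ}
    (hi : α ≤ #(A.filter (fun x => x < 0)) + i + 1)
    (hj : α ≤ #(A.filter (fun x => 0 < x)) + j + 1) :
    #(sigmaAtLeast (A.filter (fun x => 0 < x)) i) +
      #(sigmaAtLeast (A.filter (fun x => x < 0)) j) ≤ #(sigmaAtLeast A α) + 1 := by
  set P := A.filter (fun x => 0 < x)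
  set N := A.filter (fun x => x < 0)
  let low := (sigmaAtLeast P i).image ((∑ x ∈ N, x) + ·)
  let high := ((sigmaAtLeast N j).erase (∑ x ∈ N, x)).image ((∑ x ∈ P, x) + ·)
  have hlow : low ⊆ sigmaAtLeast A α := by
    intro t ht
    obtain ⟨u, hu, rfl⟩ := mem_image.1 ht
    obtain ⟨B, hBP, hiB, rfl⟩ := mem_sigmaAtLeast_s8.1 hu
    rw [add_comm]
    exact add_mem_sigmaAtLeast h0 hBP subset_rfl (by omega)
  have hhigh : high ⊆ sigmaAtLeast A α := by
    intro t ht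
    obtain ⟨v, hv, rfl⟩ := mem_image.1 ht
    obtain ⟨C, hCN, hjC, rfl⟩ := mem_sigmaAtLeast_s8.1 (mem_of_mem_erase hv)
    exact add_mem_sigmaAtLeast h0 subset_rfl hCN (by omega)
  have hdisj : Disjoint low high := by
    rw [disjoint_left]
    intro t ht ht'
    obtain ⟨u, hu, rfl⟩ := mem_image.1 ht
    obtain ⟨v, hv, huv⟩ := mem_image.1 ht'
    have hu_le := le_sum_of_mem_sigmaAtLeast (fun x hx => (mem_filter.1 hx).2.le) hu
    have hv_ge := sum_le_of_mem_sigmaAtLeast (fun x hx => (mem_filter.1 hx).2.le)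
      (mem_of_mem_erase hv)
    have hv_ne := ne_of_mem_erase hv
    omega
  have hcard_erase := pred_card_le_card_erase (s := sigmaAtLeast N j) (a := ∑ x ∈ N, x)
  calc #(sigmaAtLeast P i) + #(sigmaAtLeast N j) ≤ #low + #high + 1 := by
        rw [card_image_of_injective _ (add_right_injective _),
          card_image_of_injective _ (add_right_injective _)]
        omega
    _ = #(low ∪ high) + 1 := by rw [card_union_of_disjoint hdisj]
    _ ≤ #(sigmaAtLeast A α) + 1 := by grw [union_subset hlow hhigh]

end SignSplit

theorem stmt_8_general (n p α : ℕ) (A : Finset ℤ)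
    (hneg : (A.filter (fun x => x < 0)).card = n)
    (hpos : (A.filter (fun x => 0 < x)).card = p)
    (h0 : (0 : ℤ) ∈ A)
    (hαn : α ≤ n) (hαp : p < α) :
    ((sigmaAtLeast A α).card : ℤ) ≥
      (n : ℤ) * ((n : ℤ) + 1) / 2 + (p : ℤ) * ((p : ℤ) + 1) / 2
        - ((α : ℤ) - (p : ℤ)) * ((α : ℤ) - (p : ℤ) - 1) / 2 + 1 := by
  obtain ⟨β, rfl⟩ : ∃ β, α = p + 1 + β := ⟨α - p - 1, by omega⟩
  have hsplit := card_add_card_sigmaAtLeast_le h0 (α := p + 1 + β) (i := 0) (j := β)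
    (by omega) (by omega)
  have hP := le_card_sigmaAtLeast_of_pos (A := A.filter (fun x => 0 < x)) (k := 0)
    (fun x hx => (mem_filter.1 hx).2) (Nat.zero_le _)
  have hN := le_card_sigmaAtLeast_of_pos (A := -A.filter (fun x => x < 0)) (k := β)
    (fun x hx => by simpa using (mem_filter.1 (mem_neg'.1 hx)).2) (by rw [card_neg]; omega)
  rw [card_neg, sigmaAtLeast_neg, card_neg, hneg] at hN
  rw [hpos] at hP
  have hβ : ((p + 1 + β : ℕ) : ℤ) - p = β + 1 := by push_cast; ring
  rw [hβ, add_sub_cancel_right, mul_comm _ (β : ℤ)]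
  have hn2 := (Int.even_mul_succ_self n).two_dvd
  have hp2 := (Int.even_mul_succ_self p).two_dvd
  have hβ2 := (Int.even_mul_succ_self β).two_dvd
  zify at hP hN hsplit
  omega

theorem stmt_8 (n p α : ℕ) (hn : 1 ≤ n) (hp : 1 ≤ p) (A : Finset ℤ)
    (hneg : (A.filter (fun x => x < 0)).card = n)
    (hpos : (A.filter (fun x => 0 < x)).card = p)
    (h0 : (0 : ℤ) ∈ A)
    (hα : α ≤ n + p + 1) (hαn : α ≤ n) (hαp : p < α) :
    ((sigmaAtLeast A α).card : ℤ) ≥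
      (n : ℤ) * ((n : ℤ) + 1) / 2 + (p : ℤ) * ((p : ℤ) + 1) / 2
        - ((α : ℤ) - (p : ℤ)) * ((α : ℤ) - (p : ℤ) - 1) / 2 + 1 :=
  stmt_8_general n p α A hneg hpos h0 hαn hαp
end

section
/- Let k ≥ 2, r ≥ 1, and α be integers with 0 ≤ α ≤ rk − 1, and let m ∈ [1, k] be the integer with (m−1)r ≤ α < mr. Let A be a set of k distinct integers with A ∩ (−A) = {0}, and let 𝒜 be the multiset consisting of each element of A with multiplicity exactly r. Then |Σ_α(𝒜)| ≥ r(k(k−1)/2 − m(m−1)/2) + (m−1)(mr − α) + 1. -/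
/-- `sigmaSeqAtLeast A r α` is the set of all subsequence sums of the multiset
consisting of each element of `A` with multiplicity `r`, coming from
submultisets with at least `α` terms. -/
def sigmaSeqAtLeast (A : Finset ℤ) (r α : ℕ) : Finset ℤ :=
  (((r • A.val).powerset.filter (fun B => α ≤ Multiset.card B)).map
    Multiset.sum).toFinset

/-!
Induction on `#A`, removing the element `a` of largest absolute value (by the symmetry
`A ↦ -A` we may take `a > 0`). Appending `a` to `A' = A \ {a}` produces `r (#A' - 1) + r` sums
above `max Σ_α(A')`, which accounts for the increase `r * #A'` of the bound; `A ∩ (-A) = {0}` is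
what keeps these sums distinct. In the base case `#A = m` we have `α = r m - d` with
`1 ≤ d ≤ r`, and removing at most `d` terms from the full multiset already yields
`d (m - 1) + 1` distinct sums.
-/

open Finset Pointwise

theorem Int.natCast_choose_two (n : ℕ) : ((n.choose 2 : ℕ) : ℤ) = n * (n - 1) / 2 := by
  rcases n with _ | n
  · simp
  · have h := Nat.add_one_mul_choose_eq n 1
    rw [Nat.choose_one_right] at h
    have h' : ((n + 1 : ℕ) : ℤ) * ((n + 1 : ℕ) - 1) = (n + 1).choose 2 * 2 := by
      zify at h
      push_cast
      linear_combination h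
    rw [h', Int.mul_ediv_cancel _ two_ne_zero]

theorem Finset.card_union_of_forall_lt {α : Type*} [Preorder α] [DecidableEq α] {s t : Finset α}
    (h : ∀ x ∈ s, ∀ y ∈ t, x < y) : #(s ∪ t) = #s + #t :=
  card_union_of_disjoint (disjoint_left.2 fun x hs ht => (h x hs x ht).false)

theorem Multiset.cons_replicate_le {α : Type*} [DecidableEq α] {C : Multiset α} {p q : α}
    {e : ℕ} (hp : e < C.count p) (hq : e ≤ C.count q) : p ::ₘ replicate e q ≤ C := by
  rw [le_iff_count]
  intro x
  rw [count_cons, count_replicate]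
  split_ifs <;> subst_vars <;> omega

namespace Finset

variable {β : Type*} [DecidableEq β] {A : Finset β} {r : ℕ}

theorem neg_val [InvolutiveNeg β] (A : Finset β) : (-A).val = A.val.map Neg.neg := by
  rw [← image_neg_eq_neg, image_val, Multiset.dedup_eq_self.2 (A.nodup.map neg_injective)]

theorem count_nsmul_val_of_mem {t : β} (ht : t ∈ A) : (r • A.val).count t = r := by
  rw [Multiset.count_nsmul, Multiset.count_eq_one_of_mem A.nodup ht, mul_one]

theorem count_le_of_le_nsmul_val {B : Multiset β} (hB : B ≤ r • A.val) (t : β) :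
    B.count t ≤ r := by
  refine (Multiset.count_le_of_le t hB).trans ?_
  rw [Multiset.count_nsmul]
  exact (Nat.mul_le_mul_left r (Multiset.nodup_iff_count_le_one.1 A.nodup t)).trans_eq (mul_one r)

theorem cons_le_nsmul_val {B : Multiset β} {t : β} (hB : B ≤ r • A.val) (ht : t ∈ A)
    (hc : B.count t < r) : t ::ₘ B ≤ r • A.val := by
  rw [Multiset.le_iff_count]
  intro x
  rcases eq_or_ne x t with rfl | hx
  · rw [Multiset.count_cons_self, count_nsmul_val_of_mem ht]
    omega
  · rw [Multiset.count_cons_of_ne hx]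
    exact Multiset.count_le_of_le x hB

theorem add_replicate_le_nsmul_insert_val {a : β} {B : Multiset β} {j : ℕ} (ha : a ∉ A)
    (hB : B ≤ r • A.val) (hj : j ≤ r) :
    B + Multiset.replicate j a ≤ r • (insert a A).val := by
  rw [insert_val_of_notMem ha, ← Multiset.singleton_add, nsmul_add, Multiset.nsmul_singleton,
    add_comm (Multiset.replicate r a)]
  exact add_le_add hB ((Multiset.replicate_le_replicate a).2 hj)

end Finset

section Ladder

def ladder (n : ℕ) (q : ℤ) (P : Finset ℤ) : Finset ℤ :=
  (range n ×ˢ P).image fun x => x.1 * q + x.2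

variable {n : ℕ} {q x : ℤ} {P : Finset ℤ}

theorem mem_ladder : x ∈ ladder n q P ↔ ∃ e < n, ∃ p ∈ P, e * q + p = x := by
  simp [ladder, and_assoc]

theorem card_ladder (hP : ∀ p ∈ P, 0 < p * q ∧ |p| ≤ |q|) : #(ladder n q P) = n * #P := by
  have hle : ∀ p ∈ P, p * q ≤ q * q := fun p hp => by
    have := mul_le_mul_of_nonneg_right (hP p hp).2 (abs_nonneg q)
    rw [← abs_mul, abs_mul_abs_self] at this
    exact (le_abs_self _).trans this
  rw [ladder, card_image_of_injOn, card_product, card_range]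
  rintro ⟨e, p⟩ hp ⟨e', p'⟩ hp' h
  simp only [coe_product, Set.mem_prod, mem_coe] at hp hp' h
  have key : ((e : ℤ) - e') * (q * q) = p' * q - p * q := by linear_combination q * h
  have := (hP p hp.2).1; have := (hP p' hp'.2).1
  have := hle p hp.2; have := hle p' hp'.2
  have hee : e = e' := by
    rcases lt_trichotomy e e' with hlt | heq | hgt
    · have : (e : ℤ) + 1 ≤ e' := by exact_mod_cast hlt
      nlinarith
    · exact heq
    · have : (e' : ℤ) + 1 ≤ e := by exact_mod_cast hgt
      nlinarith
  subst hee
  simp_all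

theorem mul_pos_of_mem_ladder (hP : ∀ p ∈ P, 0 < p * q) (hx : x ∈ ladder n q P) : 0 < x * q := by
  obtain ⟨e, -, p, hp, rfl⟩ := mem_ladder.1 hx
  nlinarith [hP p hp, mul_self_nonneg q, (Nat.cast_nonneg e : (0 : ℤ) ≤ e)]

theorem le_of_mem_ladder (hq : 0 ≤ q) (hP : ∀ p ∈ P, p ≤ q) (hx : x ∈ ladder n q P) :
    x ≤ n * q := by
  obtain ⟨e, he, p, hp, rfl⟩ := mem_ladder.1 hx
  have : (e : ℤ) + 1 ≤ n := by exact_mod_cast he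
  nlinarith [hP p hp]

end Ladder

section Sigma

variable {A : Finset ℤ} {r α : ℕ}

theorem mem_sigmaSeqAtLeast {s : ℤ} :
    s ∈ sigmaSeqAtLeast A r α ↔ ∃ B ≤ r • A.val, α ≤ Multiset.card B ∧ B.sum = s := by
  simp only [sigmaSeqAtLeast, Multiset.mem_toFinset, Multiset.mem_map, Multiset.mem_filter,
    Multiset.mem_powerset, and_assoc]

theorem sum_mem_sigmaSeqAtLeast {B : Multiset ℤ} (hB : B ≤ r • A.val)
    (hα : α ≤ Multiset.card B) : B.sum ∈ sigmaSeqAtLeast A r α :=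
  mem_sigmaSeqAtLeast.2 ⟨B, hB, hα, rfl⟩

theorem sigmaSeqAtLeast_nonempty (hα : α ≤ r * #A) : (sigmaSeqAtLeast A r α).Nonempty :=
  ⟨_, sum_mem_sigmaSeqAtLeast le_rfl (by rwa [Multiset.card_nsmul, card_val])⟩

theorem sigmaSeqAtLeast_mono {A' : Finset ℤ} (h : A' ⊆ A) :
    sigmaSeqAtLeast A' r α ⊆ sigmaSeqAtLeast A r α := by
  intro s hs
  obtain ⟨B, hB, hα, rfl⟩ := mem_sigmaSeqAtLeast.1 hs
  exact sum_mem_sigmaSeqAtLeast (hB.trans (nsmul_le_nsmul_right (val_le_iff.2 h) r)) hα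

theorem neg_sigmaSeqAtLeast_subset : -sigmaSeqAtLeast A r α ⊆ sigmaSeqAtLeast (-A) r α := by
  intro s hs
  obtain ⟨B, hB, hα, hsum⟩ := mem_sigmaSeqAtLeast.1 (mem_neg'.1 hs)
  rw [← neg_neg s, ← hsum, ← Multiset.sum_map_neg']
  refine sum_mem_sigmaSeqAtLeast ?_ (by rwa [Multiset.card_map])
  rw [neg_val, ← Multiset.map_nsmul]
  exact Multiset.map_le_map hB

theorem card_sigmaSeqAtLeast_neg : #(sigmaSeqAtLeast (-A) r α) = #(sigmaSeqAtLeast A r α) := by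
  refine le_antisymm ?_ ?_
  · simpa using card_le_card (neg_sigmaSeqAtLeast_subset (A := -A) (r := r) (α := α))
  · simpa using card_le_card (neg_sigmaSeqAtLeast_subset (A := A) (r := r) (α := α))

theorem sum_sub_sum_mem_sigmaSeqAtLeast {C R : Multiset ℤ} (hC : C ≤ r • A.val) (hR : R ≤ C)
    (hα : α + Multiset.card R ≤ Multiset.card C) : C.sum - R.sum ∈ sigmaSeqAtLeast A r α := by
  have hsum : (C - R).sum = C.sum - R.sum := by
    rw [eq_sub_iff_add_eq, ← Multiset.sum_add, tsub_add_cancel_of_le hR]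
  rw [← hsum]
  exact sum_mem_sigmaSeqAtLeast (tsub_le_self.trans hC) (by rw [Multiset.card_sub hR]; omega)

/-- The sums are `C.sum - (e * q + p)` for `p ∈ P` and `e < n`, with `q ∈ P` of largest absolute
value; `σ` only records the common sign of the elements of `P`. -/
theorem exists_subset_sigmaSeqAtLeast {C : Multiset ℤ} {n : ℕ} {P : Finset ℤ} {σ : ℤ}
    (hC : C ≤ r • A.val) (hn : α + n ≤ Multiset.card C)
    (hP : ∀ p ∈ P, n ≤ C.count p ∧ 0 < p * σ) :
    ∃ L ⊆ sigmaSeqAtLeast A r α, #L = n * #P ∧ ∀ y ∈ L, 0 < (C.sum - y) * σ := by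
  rcases P.eq_empty_or_nonempty with rfl | hne
  · exact ⟨∅, empty_subset _, by simp, by simp⟩
  obtain ⟨q, hqP, hq⟩ := P.exists_max_image abs hne
  have hqσ := (hP q hqP).2
  have hPq : ∀ p ∈ P, 0 < p * q := fun p hp => by
    have := (hP p hp).2
    nlinarith [mul_pos this hqσ, mul_self_nonneg σ]
  refine ⟨(ladder n q P).image (C.sum - ·), ?_, ?_, ?_⟩
  · intro y hy
    obtain ⟨x, hx, rfl⟩ := mem_image.1 hy
    obtain ⟨e, he, p, hp, rfl⟩ := mem_ladder.1 hx
    have hR : p ::ₘ Multiset.replicate e q ≤ C :=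
      Multiset.cons_replicate_le (he.trans_le (hP p hp).1) (he.le.trans (hP q hqP).1)
    have hcard : α + Multiset.card (p ::ₘ Multiset.replicate e q) ≤ Multiset.card C := by
      simp only [Multiset.card_cons, Multiset.card_replicate]
      omega
    have hmem := sum_sub_sum_mem_sigmaSeqAtLeast hC hR hcard
    simpa [add_comm] using hmem
  · rw [card_image_of_injective _ sub_right_injective, card_ladder fun p hp => ⟨hPq p hp, hq p hp⟩]
  · intro y hy
    obtain ⟨x, hx, rfl⟩ := mem_image.1 hy
    have := mul_pos_of_mem_ladder hPq hx
    simp only [sub_sub_cancel]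
    nlinarith [mul_pos this hqσ, mul_self_nonneg q]

theorem card_erase_zero_mul_add_one_le_card_sigmaSeqAtLeast {d : ℕ} (hd : d ≤ r)
    (hα : α + d ≤ r * #A) : d * #(A.erase 0) + 1 ≤ #(sigmaSeqAtLeast A r α) := by
  have hC : α + d ≤ Multiset.card (r • A.val) := by rwa [Multiset.card_nsmul, card_val]
  have hcount : ∀ p ∈ A.erase 0, d ≤ (r • A.val).count p := fun p hp => by
    rw [count_nsmul_val_of_mem (mem_of_mem_erase hp)]
    exact hd
  obtain ⟨L₁, hL₁, hcard₁, hlt⟩ := exists_subset_sigmaSeqAtLeast (σ := 1) le_rfl hC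
    (P := (A.erase 0).filter (0 < ·)) fun p hp => by
      rw [mem_filter] at hp
      exact ⟨hcount p hp.1, by simpa using hp.2⟩
  obtain ⟨L₂, hL₂, hcard₂, hgt⟩ := exists_subset_sigmaSeqAtLeast (σ := -1) le_rfl hC
    (P := (A.erase 0).filter (¬0 < ·)) fun p hp => by
      rw [mem_filter, mem_erase] at hp
      exact ⟨hcount p (mem_erase.2 hp.1), by omega⟩
  have hT : (r • A.val).sum ∈ sigmaSeqAtLeast A r α := sum_mem_sigmaSeqAtLeast le_rfl (by omega)
  have hlt' : ∀ y ∈ L₁, y < (r • A.val).sum := fun y hy => by linarith [hlt y hy]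
  have hgt' : ∀ y ∈ L₂, (r • A.val).sum < y := fun y hy => by linarith [hgt y hy]
  calc d * #(A.erase 0) + 1 = #L₁ + #{(r • A.val).sum} + #L₂ := by
        rw [← card_filter_add_card_filter_not (0 < ·) (s := A.erase 0), hcard₁, hcard₂,
          card_singleton]
        ring
    _ = #(L₁ ∪ {(r • A.val).sum} ∪ L₂) := by
        rw [card_union_of_forall_lt, card_union_of_forall_lt]
        · simpa using hlt'
        · simp only [mem_union, mem_singleton]
          rintro x (hx | rfl) y hy
          · exact (hlt' x hx).trans (hgt' y hy)
          · exact hgt' y hy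
    _ ≤ #(sigmaSeqAtLeast A r α) :=
        card_le_card (union_subset (union_subset hL₁ (singleton_subset_iff.2 hT)) hL₂)

theorem exists_sum_eq_max (hne : (sigmaSeqAtLeast A r α).Nonempty) :
    ∃ B ≤ r • A.val, α ≤ Multiset.card B ∧ (∀ s ∈ sigmaSeqAtLeast A r α, s ≤ B.sum) ∧
      ∀ t ∈ A, 0 < t → B.count t = r := by
  obtain ⟨B, hB, hα, hsum⟩ := mem_sigmaSeqAtLeast.1 ((sigmaSeqAtLeast A r α).max'_mem hne)
  have hmax : ∀ s ∈ sigmaSeqAtLeast A r α, s ≤ B.sum := fun s hs => hsum ▸ le_max' _ s hs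
  refine ⟨B, hB, hα, hmax, fun t ht htpos => ?_⟩
  by_contra hne
  have hlt := (count_le_of_le_nsmul_val hB t).lt_of_ne hne
  have := hmax _ (sum_mem_sigmaSeqAtLeast (cons_le_nsmul_val hB ht hlt)
    (hα.trans (Multiset.card_le_card (Multiset.le_cons_self B t))))
  rw [Multiset.sum_cons] at this
  omega

theorem image_add_ladder_subset_sigmaSeqAtLeast_insert {a c : ℤ} {W : Finset ℤ} (ha : a ∉ A)
    (hW : ∀ w ∈ W, ∃ B ≤ r • A.val, α ≤ Multiset.card B + 1 ∧ B.sum + a = c + w) :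
    (ladder r a W).image (c + ·) ⊆ sigmaSeqAtLeast (insert a A) r α := by
  intro y hy
  obtain ⟨x, hx, rfl⟩ := mem_image.1 hy
  obtain ⟨e, he, w, hw, rfl⟩ := mem_ladder.1 hx
  obtain ⟨B, hB, hα, hsum⟩ := hW w hw
  have hmem := sum_mem_sigmaSeqAtLeast (add_replicate_le_nsmul_insert_val ha hB he)
    (α := α) (by rw [Multiset.card_add, Multiset.card_replicate]; omega)
  rw [Multiset.sum_add, Multiset.sum_replicate, nsmul_eq_mul] at hmem
  convert hmem using 1
  push_cast
  linear_combination -hsum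

theorem exists_sum_eq_sub_abs {B : Multiset ℤ} {t : ℤ} (hB : B ≤ r • A.val) (ht : t ∈ A)
    (hpos : 0 < t → t ∈ B) (hneg : t < 0 → B.count t < r) :
    ∃ B' ≤ r • A.val, Multiset.card B ≤ Multiset.card B' + 1 ∧ B'.sum = B.sum - |t| := by
  rcases lt_trichotomy t 0 with htneg | rfl | htpos
  · refine ⟨t ::ₘ B, cons_le_nsmul_val hB ht (hneg htneg), ?_, ?_⟩
    · rw [Multiset.card_cons]
      omega
    · rw [Multiset.sum_cons, abs_of_neg htneg]
      ring
  · exact ⟨B, hB, by omega, by simp⟩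
  · have htB := hpos htpos
    refine ⟨B.erase t, (Multiset.erase_le t B).trans hB, ?_, ?_⟩
    · rw [Multiset.card_erase_add_one htB]
    · rw [abs_of_pos htpos, ← Multiset.sum_erase htB]
      ring

/-- The sums are `M + e * a + (a - |t|)` for `e < r` and `t ∈ insert 0 D`. -/
theorem exists_subset_sigmaSeqAtLeast_insert {a M : ℤ} {D : Finset ℤ} (ha : 0 < a) (haA : a ∉ A)
    (hlt : ∀ t ∈ D, |t| < a) (hD0 : 0 ∉ D) (hinj : Set.InjOn abs (D : Set ℤ))
    (hM : ∀ t ∈ insert 0 D, ∃ B ≤ r • A.val, α ≤ Multiset.card B + 1 ∧ B.sum = M - |t|) :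
    ∃ L ⊆ sigmaSeqAtLeast (insert a A) r α, #L = r * (#D + 1) ∧
      ∀ y ∈ L, M < y ∧ y ≤ M + r * a := by
  set W := (insert 0 D).image (a - |·|)
  have hW : ∀ w ∈ W, 0 < w ∧ w ≤ a := by
    simp only [W, mem_image, mem_insert]
    rintro w ⟨t, rfl | ht, rfl⟩
    · simpa using ha
    · have := hlt t ht
      have := abs_nonneg t
      constructor <;> linarith
  have hWa : ∀ w ∈ W, 0 < w * a ∧ |w| ≤ |a| := fun w hw => by
    obtain ⟨hw0, hwa⟩ := hW w hw
    exact ⟨mul_pos hw0 ha, by rwa [abs_of_pos hw0, abs_of_pos ha]⟩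
  have hWcard : #W = #D + 1 := by
    rw [card_image_of_injOn, card_insert_of_notMem hD0]
    simp only [coe_insert, Set.InjOn, Set.mem_insert_iff, mem_coe, sub_right_inj]
    rintro s (rfl | hs) t (rfl | ht) h
    · rfl
    · exact absurd ((by simpa using h.symm : t = 0) ▸ ht) hD0
    · exact absurd ((by simpa using h : s = 0) ▸ hs) hD0
    · exact hinj hs ht h
  refine ⟨(ladder r a W).image (M + ·), ?_, ?_, ?_⟩
  · refine image_add_ladder_subset_sigmaSeqAtLeast_insert haA fun w hw => ?_
    obtain ⟨t, ht, rfl⟩ := mem_image.1 hw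
    obtain ⟨B, hB, hα, hsum⟩ := hM t ht
    exact ⟨B, hB, hα, by rw [hsum]; ring⟩
  · rw [card_image_of_injective _ (add_right_injective _), card_ladder hWa, hWcard]
  · intro y hy
    obtain ⟨x, hx, rfl⟩ := mem_image.1 hy
    have := mul_pos_of_mem_ladder (fun w hw => (hWa w hw).1) hx
    have := le_of_mem_ladder ha.le (fun w hw => (hW w hw).2) hx
    constructor <;> nlinarith

/-- With `M = max Σ_α(A)` attained by `B`, the new sums are those of
`exists_subset_sigmaSeqAtLeast_insert`, where `M - |t|` comes from `B` by dropping a positive `t`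
or adding a negative `t` that `B` uses fewer than `r` times, and, above `M + r * a`, those
obtained from `B` plus `r` copies of `a` by removing negative terms that `B` uses `r` times. -/
theorem card_add_le_card_sigmaSeqAtLeast_insert_of_pos {a : ℤ} (hr : 1 ≤ r) (ha : 0 < a)
    (hlt : ∀ t ∈ A, |t| < a) (hinj : Set.InjOn abs (A : Set ℤ)) (hα : α ≤ r * #A) :
    #(sigmaSeqAtLeast A r α) + r * (#(A.erase 0) + 1) ≤
      #(sigmaSeqAtLeast (insert a A) r α) := by
  have haA : a ∉ A := fun h => (hlt a h).ne (abs_of_pos ha)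
  obtain ⟨B, hB, hBα, hmax, hfull⟩ := exists_sum_eq_max (sigmaSeqAtLeast_nonempty hα)
  set F := (A.erase 0).filter (fun t => t < 0 ∧ B.count t = r)
  set D := (A.erase 0).filter (fun t => ¬(t < 0 ∧ B.count t = r))
  have hDA : D ⊆ A := (filter_subset _ _).trans (erase_subset 0 A)
  obtain ⟨W, hW, hWcard, hWbounds⟩ :=
    exists_subset_sigmaSeqAtLeast_insert (α := α) (M := B.sum) (D := D) ha haA
      (fun t ht => hlt t (hDA ht)) (by simp [D]) (hinj.mono (by simpa using hDA)) fun t ht => by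
        rcases mem_insert.1 ht with rfl | ht
        · exact ⟨B, hB, by omega, by simp⟩
        obtain ⟨-, hsat⟩ := mem_filter.1 ht
        obtain ⟨B', hB', hcard, hsum⟩ := exists_sum_eq_sub_abs hB (hDA ht)
          (fun hpos => Multiset.count_pos.1 (by rw [hfull t (hDA ht) hpos]; omega))
          (fun hneg => (count_le_of_le_nsmul_val hB t).lt_of_ne fun h => hsat ⟨hneg, h⟩)
        exact ⟨B', hB', by omega, hsum⟩
  obtain ⟨L, hL, hLcard, hLbounds⟩ := exists_subset_sigmaSeqAtLeast (α := α) (n := r) (σ := -1)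
    (P := F) (add_replicate_le_nsmul_insert_val haA hB le_rfl)
    (by rw [Multiset.card_add, Multiset.card_replicate]; omega) fun p hp => by
      obtain ⟨-, hneg, hcount⟩ := mem_filter.1 hp
      rw [Multiset.count_add]
      exact ⟨by omega, by omega⟩
  rw [Multiset.sum_add, Multiset.sum_replicate, nsmul_eq_mul] at hLbounds
  have hra : 0 < (r : ℤ) * a := mul_pos (by exact_mod_cast hr) ha
  calc #(sigmaSeqAtLeast A r α) + r * (#(A.erase 0) + 1)
      = #(sigmaSeqAtLeast A r α) + #W + #L := by
        rw [hWcard, hLcard,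
          ← card_filter_add_card_filter_not (s := A.erase 0) (fun t => t < 0 ∧ B.count t = r)]
        ring
    _ = #(sigmaSeqAtLeast A r α ∪ W ∪ L) := by
        rw [card_union_of_forall_lt, card_union_of_forall_lt]
        · exact fun s hs y hy => (hmax s hs).trans_lt (hWbounds y hy).1
        · simp only [mem_union]
          rintro s (hs | hs) y hy <;> have := hLbounds y hy
          · linarith [hmax s hs]
          · linarith [hWbounds s hs]
    _ ≤ #(sigmaSeqAtLeast (insert a A) r α) :=
        card_le_card (union_subset (union_subset (sigmaSeqAtLeast_mono (subset_insert a A)) hW) hL)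

theorem card_add_le_card_sigmaSeqAtLeast_insert {a : ℤ} (hr : 1 ≤ r) (ha : a ≠ 0) (h0 : 0 ∈ A)
    (hlt : ∀ t ∈ A, |t| < |a|) (hinj : Set.InjOn abs (A : Set ℤ)) (hα : α ≤ r * #A) :
    #(sigmaSeqAtLeast A r α) + r * #A ≤ #(sigmaSeqAtLeast (insert a A) r α) := by
  wlog hpos : 0 < a generalizing A a
  · have hneg := this (A := -A) (a := -a) (neg_ne_zero.2 ha) (by simpa using h0)
      (fun t ht => by simpa using hlt (-t) (mem_neg'.1 ht))
      (fun s hs t ht h => neg_injective (hinj (mem_neg'.1 hs) (mem_neg'.1 ht) (by simpa using h)))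
      (by rwa [card_neg]) (by omega)
    rwa [← neg_insert, card_sigmaSeqAtLeast_neg, card_sigmaSeqAtLeast_neg, card_neg] at hneg
  have h := card_add_le_card_sigmaSeqAtLeast_insert_of_pos hr hpos
    (by simpa only [abs_of_pos hpos] using hlt) hinj hα
  rwa [card_erase_of_mem h0, Nat.sub_add_cancel (card_pos.2 ⟨0, h0⟩)] at h

end Sigma

theorem le_card_sigmaSeqAtLeast {A : Finset ℤ} {r α m : ℕ} (hml : (m - 1) * r ≤ α)
    (hmu : α < m * r) (hm : m ≤ #A) (h0 : 0 ∈ A) (hinj : Set.InjOn abs (A : Set ℤ)) :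
    (r : ℤ) * ((#A).choose 2 - m.choose 2) + (m - 1) * (m * r - α) + 1 ≤
      #(sigmaSeqAtLeast A r α) := by
  have hm1 : 1 ≤ m := Nat.pos_of_ne_zero (by rintro rfl; simp at hmu)
  have hr : 1 ≤ r := Nat.pos_of_ne_zero (by rintro rfl; simp at hmu)
  have hmr : m * r - r ≤ α := by rwa [← Nat.sub_one_mul]
  obtain ⟨k, hk⟩ := Nat.exists_eq_add_of_le hm
  induction k generalizing A with
  | zero =>
    rw [Nat.add_zero] at hk
    have h := card_erase_zero_mul_add_one_le_card_sigmaSeqAtLeast (A := A) (r := r) (α := α)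
      (d := m * r - α) (by omega) (by rw [hk, Nat.mul_comm r m]; omega)
    rw [card_erase_of_mem h0, hk] at h
    zify [hmu.le, hm1] at h
    rw [hk]
    linarith
  | succ k ih =>
    obtain ⟨a, haA, hmax⟩ := A.exists_max_image abs ⟨0, h0⟩
    obtain ⟨t, htA, ht0⟩ := A.exists_mem_ne (by omega) 0
    have ha0 : a ≠ 0 := by
      rintro rfl
      exact ht0 (abs_nonpos_iff.1 (hmax t htA))
    have hA' : #(A.erase a) = m + k := by rw [card_erase_of_mem haA]; omega
    have hstep := card_add_le_card_sigmaSeqAtLeast_insert (α := α) hr ha0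
      (mem_erase.2 ⟨Ne.symm ha0, h0⟩)
      (fun t ht => (hmax t (mem_of_mem_erase ht)).lt_of_ne fun h =>
        (ne_of_mem_erase ht) (hinj (mem_of_mem_erase ht) haA h))
      (hinj.mono (erase_subset a A)) (by rw [hA']; nlinarith)
    have hih := ih (by omega) (mem_erase.2 ⟨Ne.symm ha0, h0⟩) (hinj.mono (erase_subset a A)) hA'
    rw [insert_erase haA, hA'] at hstep
    rw [hA'] at hih
    rw [hk, ← add_assoc, Nat.choose_succ_succ', Nat.choose_one_right]
    push_cast at hih hstep ⊢
    linarith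

theorem injOn_abs_of_inter_image_neg_eq {A : Finset ℤ}
    (hA : A ∩ A.image (fun x => -x) = {0}) : Set.InjOn abs (A : Set ℤ) := by
  intro s hs t ht h
  rcases abs_eq_abs.1 h with h | h
  · exact h
  · have : t ∈ A ∩ A.image (fun x => -x) := mem_inter.2 ⟨ht, mem_image.2 ⟨s, hs, by omega⟩⟩
    rw [hA, mem_singleton] at this
    omega

theorem stmt_14_general (k r α m : ℕ) (hmk : m ≤ k)
    (hml : (m - 1) * r ≤ α) (hmu : α < m * r)
    (A : Finset ℤ) (hcard : A.card = k)
    (hA : A ∩ A.image (fun x => -x) = {0}) :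
    ((sigmaSeqAtLeast A r α).card : ℤ) ≥
      (r : ℤ) * ((k : ℤ) * ((k : ℤ) - 1) / 2 - (m : ℤ) * ((m : ℤ) - 1) / 2)
        + ((m : ℤ) - 1) * ((m : ℤ) * (r : ℤ) - (α : ℤ)) + 1 := by
  have h0 : (0 : ℤ) ∈ A := (mem_inter.1 (hA ▸ mem_singleton_self 0)).1
  have h := le_card_sigmaSeqAtLeast hml hmu (hcard ▸ hmk) h0 (injOn_abs_of_inter_image_neg_eq hA)
  rwa [hcard, Int.natCast_choose_two, Int.natCast_choose_two] at h

theorem stmt_14 (k r α m : ℕ) (hk : 2 ≤ k) (hr : 1 ≤ r)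
    (hα : α ≤ r * k - 1) (hm1 : 1 ≤ m) (hmk : m ≤ k)
    (hml : (m - 1) * r ≤ α) (hmu : α < m * r)
    (A : Finset ℤ) (hcard : A.card = k)
    (hA : A ∩ A.image (fun x => -x) = {0}) :
    ((sigmaSeqAtLeast A r α).card : ℤ) ≥
      (r : ℤ) * ((k : ℤ) * ((k : ℤ) - 1) / 2 - (m : ℤ) * ((m : ℤ) - 1) / 2)
        + ((m : ℤ) - 1) * ((m : ℤ) * (r : ℤ) - (α : ℤ)) + 1 :=
  stmt_14_general k r α m hmk hml hmu A hcard hA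
end
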